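/- The homogeneous product ⟨·|·⟩♠ is homogeneous in the first argument: for all r ∈ ℝ and all x, y ∈ X, ⟨r·x|y⟩♠ = r·⟨x|y⟩♠. -/

import Mathlib

/-! Scaling `x` by `r > 0` leaves its normalization `x / ‖x‖` unchanged and multiplies the
prefactor `‖x‖` by `r`, while replacing `x` by `-x` swaps the two squared weights in the
difference. A negative scalar is `-1` times a positive one. -/

noncomputable def spadeProduct {X : Type*} [AddCommGroup X] [Module ℝ X] (N : X → ℝ) (x y : X) :
    ℝ :=
  if N x * N y = 0 then 0
  else (1/4) * N x * N y *
    ((N ((N x)⁻¹ • x + (N y)⁻¹ • y)) ^ 2 - (N ((N x)⁻¹ • x - (N y)⁻¹ • y)) ^ 2)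

namespace spadeProduct

variable {X : Type*} [AddCommGroup X] [Module ℝ X] {N : X → ℝ}

theorem of_weight_left_eq_zero {x : X} (hx : N x = 0) (y : X) : spadeProduct N x y = 0 := by
  rw [spadeProduct, if_pos (by rw [hx, zero_mul])]

theorem weight_neg (hom : ∀ (r : ℝ) (x : X), N (r • x) = |r| * N x) (x : X) : N (-x) = N x := by
  rw [← neg_one_smul ℝ x, hom, abs_neg, abs_one, one_mul]

theorem neg_left (hom : ∀ (r : ℝ) (x : X), N (r • x) = |r| * N x) (x y : X) :
    spadeProduct N (-x) y = -spadeProduct N x y := by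
  set u := (N x)⁻¹ • x
  set v := (N y)⁻¹ • y
  have hplus : N (-u + v) = N (u - v) := by rw [← weight_neg hom, neg_add, neg_neg, sub_eq_add_neg]
  have hminus : N (-u - v) = N (u + v) := by rw [← weight_neg hom (u + v), neg_add, sub_eq_add_neg]
  unfold spadeProduct
  rw [weight_neg hom, smul_neg, hplus, hminus]
  split_ifs <;> ring

theorem smul_left_of_pos (hom : ∀ (r : ℝ) (x : X), N (r • x) = |r| * N x) {r : ℝ} (hr : 0 < r)
    (x y : X) : spadeProduct N (r • x) y = r * spadeProduct N x y := by
  have hrx : N (r • x) = r * N x := by rw [hom, abs_of_pos hr]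
  rcases eq_or_ne (N x) 0 with hx | hx
  · rw [of_weight_left_eq_zero hx, of_weight_left_eq_zero (by rw [hrx, hx, mul_zero]), mul_zero]
  have hunit : (N (r • x))⁻¹ • (r • x) = (N x)⁻¹ • x := by
    rw [hrx, smul_smul]
    congr 1
    field_simp
  have hcond : r * N x * N y = 0 ↔ N x * N y = 0 := by
    rw [mul_assoc, mul_eq_zero, or_iff_right hr.ne']
  unfold spadeProduct
  rw [hunit, hrx, if_congr hcond rfl rfl]
  split_ifs <;> ring

end spadeProduct

theorem stmt_2 {X : Type*} [AddCommGroup X] [Module ℝ X]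
    (N : X → ℝ)
    (hom : ∀ (r : ℝ) (x : X), N (r • x) = |r| * N x)
    (sp : X → X → ℝ)
    (hsp : ∀ x y, sp x y =
      if N x * N y = 0 then 0
      else (1/4) * N x * N y *
        ((N ((N x)⁻¹ • x + (N y)⁻¹ • y)) ^ 2 - (N ((N x)⁻¹ • x - (N y)⁻¹ • y)) ^ 2)) :
    ∀ (r : ℝ) (x y : X), sp (r • x) y = r * sp x y := by
  obtain rfl : sp = spadeProduct N := funext₂ hsp
  intro r x y
  rcases lt_trichotomy r 0 with hr | rfl | hr
  · have hrx : r • x = -((-r) • x) := by rw [neg_smul, neg_neg]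
    rw [hrx, spadeProduct.neg_left hom, spadeProduct.smul_left_of_pos hom (neg_pos.2 hr)]
    ring
  · rw [zero_smul, zero_mul,
      spadeProduct.of_weight_left_eq_zero (by simpa using hom 0 0)]
  · exact spadeProduct.smul_left_of_pos hom hr x y
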